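/- Let L be a dcpo. If y ∈ int_{σ_s(L)} ↑x then x ≪_s y; if moreover L is strongly continuous, then the converse also holds, so that int_{σ_s(L)} ↑x = ⇑_s x. -/

import Mathlib

open Set

variable {L : Type*}

/-- A directed subset: nonempty and directed under `≤`. -/
def DirSet [Preorder L] (D : Set L) : Prop := D.Nonempty ∧ DirectedOn (· ≤ ·) D

/-- Strongly Scott open sets (the family `σ^s(L)`). -/
def StronglyScottOpen [Preorder L] [SupSet L] (U : Set L) : Prop :=
  IsUpperSet U ∧ ∀ D : Set L, DirSet D → ∀ x : L,
    Ici (sSup D) ∩ Ici x ⊆ U → ∃ d ∈ D, Ici d ∩ Ici x ⊆ U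

/-- The strong Scott topology `σ_s(L)`, generated by the strongly Scott open sets. -/
def strongScott (L : Type*) [Preorder L] [SupSet L] : TopologicalSpace L :=
  TopologicalSpace.generateFrom {U | StronglyScottOpen U}

/-- Scott open sets. -/
def ScottOpen [Preorder L] [SupSet L] (U : Set L) : Prop :=
  IsUpperSet U ∧ ∀ D : Set L, DirSet D → sSup D ∈ U → (D ∩ U).Nonempty

/-- The Scott topology `σ(L)`. -/
def scottTop (L : Type*) [Preorder L] [SupSet L] : TopologicalSpace L :=
  TopologicalSpace.generateFrom {U | ScottOpen U}

/-- The upper topology `υ(L)`. -/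
def upperTop (L : Type*) [Preorder L] : TopologicalSpace L :=
  TopologicalSpace.generateFrom {U | ∃ x : L, U = (Iic x)ᶜ}

/-- The lower topology `ω(L)`. -/
def lowerTop (L : Type*) [Preorder L] : TopologicalSpace L :=
  TopologicalSpace.generateFrom {U | ∃ x : L, U = (Ici x)ᶜ}

/-- The strong way-below relation `x ≪_s y`. -/
def SWayBelow [Preorder L] (x y : L) : Prop :=
  ∀ D : Set L, DirSet D → ∀ a : L,
    (⋂ d ∈ D, Ici d) ∩ Ici a ⊆ Ici y → ∃ d ∈ D, Ici d ∩ Ici a ⊆ Ici x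

/-- The way-below relation `x ≪ y`. -/
def WayBelow [Preorder L] [SupSet L] (x y : L) : Prop :=
  ∀ D : Set L, DirSet D → y ≤ sSup D → ∃ d ∈ D, x ≤ d

/-- `X` with topology `t` is a C-space (w.r.t. the order of `L`). -/
def IsCSpace [Preorder L] (t : TopologicalSpace L) : Prop :=
  ∀ U : Set L, @IsOpen _ (t) U → ∀ x ∈ U, ∃ y ∈ U,
    x ∈ @interior L t (Ici y) ∧ Ici y ⊆ U

/-- `L` is a strongly continuous domain. -/
def StronglyContinuousDomain (L : Type*) [Preorder L] [SupSet L] : Prop :=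
  IsCSpace (strongScott L)

/-- `L` is a continuous domain. -/
def ContinuousDomain (L : Type*) [Preorder L] [SupSet L] : Prop :=
  ∀ x : L, DirSet {y | WayBelow y x} ∧ IsLUB {y | WayBelow y x} x

/-- `L` is a hypercontinuous domain. -/
def HypercontinuousDomain (L : Type*) [Preorder L] : Prop :=
  ∀ x : L, DirSet {y | x ∈ @interior L (upperTop L) (Ici y)} ∧
    IsLUB {y | x ∈ @interior L (upperTop L) (Ici y)} x

/-- The strong Lawson topology `λ_s(L)`: common refinement of `σ_s(L)` and `ω(L)`. -/
def strongLawson (L : Type*) [Preorder L] [SupSet L] : TopologicalSpace L :=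
  TopologicalSpace.generateFrom
    {U | @IsOpen _ (strongScott L) U ∨ @IsOpen _ (lowerTop L) U}

/-!
If `y` lies in a strongly Scott open `U ⊆ ↑x`, then `⋂ ↑d ∩ ↑a ⊆ ↑y` forces `↑(sup D) ∩ ↑a ⊆ U`,
and the defining property of `U` yields `x ≪_s y`; strongly Scott open sets are closed under
finite intersections, so they form a basis of `σ_s(L)` and such a `U` exists.

Conversely, let `L` be strongly continuous. Since each `(↓z)ᶜ` is strongly Scott open, the C-space
property makes `D_y = {d | y ∈ int ↑d}` directed with `⋂_{d ∈ D_y} ↑d = ↑y`. Applying `x ≪_s y`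
to `D_y` and some `a ∈ D_y` gives `d ∈ D_y` with `↑d ∩ ↑a ⊆ ↑x`, hence
`y ∈ int ↑d ∩ int ↑a ⊆ int ↑x`.
-/

open Topology TopologicalSpace

section StronglyScottOpen

variable [Preorder L] [SupSet L]

theorem stronglyScottOpen_univ : StronglyScottOpen (univ : Set L) :=
  ⟨isUpperSet_univ, fun _ hD _ _ => ⟨hD.1.some, hD.1.some_mem, subset_univ _⟩⟩

theorem StronglyScottOpen.inter {U V : Set L} (hU : StronglyScottOpen U)
    (hV : StronglyScottOpen V) : StronglyScottOpen (U ∩ V) := by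
  refine ⟨hU.1.inter hV.1, fun D hD a h => ?_⟩
  obtain ⟨d₁, hd₁, h₁⟩ := hU.2 D hD a (h.trans inter_subset_left)
  obtain ⟨d₂, hd₂, h₂⟩ := hV.2 D hD a (h.trans inter_subset_right)
  obtain ⟨d, hd, hd₁d, hd₂d⟩ := hD.2 d₁ hd₁ d₂ hd₂
  exact ⟨d, hd, subset_inter
    ((inter_subset_inter_left _ (Ici_subset_Ici.2 hd₁d)).trans h₁)
    ((inter_subset_inter_left _ (Ici_subset_Ici.2 hd₂d)).trans h₂)⟩

theorem isTopologicalBasis_stronglyScottOpen :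
    @IsTopologicalBasis L (strongScott L) {U : Set L | StronglyScottOpen U} :=
  let _ := strongScott L
  { exists_subset_inter := fun U hU V hV _ hy => ⟨U ∩ V, hU.inter hV, hy, subset_rfl⟩
    sUnion_eq := sUnion_eq_univ_iff.2 fun _ => ⟨univ, stronglyScottOpen_univ, trivial⟩
    eq_generateFrom := rfl }

theorem mem_strongScott_interior_iff {s : Set L} {y : L} :
    y ∈ @interior L (strongScott L) s ↔ ∃ U, StronglyScottOpen U ∧ y ∈ U ∧ U ⊆ s :=
  let _ := strongScott L
  mem_interior_iff_mem_nhds.trans isTopologicalBasis_stronglyScottOpen.mem_nhds_iff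

end StronglyScottOpen

section CompletePartialOrder

variable [CompletePartialOrder L]

theorem DirSet.Ici_sSup_subset {D : Set L} (hD : DirSet D) : Ici (sSup D) ⊆ ⋂ d ∈ D, Ici d :=
  fun _ hz => mem_iInter₂.2 fun _ hd => ((CompletePartialOrder.lubOfDirected D hD.2).1 hd).trans hz

theorem stronglyScottOpen_compl_Iic (z : L) : StronglyScottOpen (Iic z)ᶜ := by
  refine ⟨(isLowerSet_Iic z).compl, fun D hD a h => ?_⟩
  by_contra! hD_meets
  have hbound : ∀ d ∈ D, d ≤ z ∧ a ≤ z := fun d hd => by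
    obtain ⟨w, ⟨hdw, haw⟩, hwz⟩ := not_subset.1 (hD_meets d hd)
    rw [notMem_compl_iff] at hwz
    exact ⟨hdw.trans hwz, haw.trans hwz⟩
  obtain ⟨d, hd⟩ := hD.1
  exact h ⟨(CompletePartialOrder.lubOfDirected D hD.2).2 fun d hd => (hbound d hd).1,
    (hbound d hd).2⟩ le_rfl

theorem StronglyScottOpen.sWayBelow {U : Set L} {x y : L} (hU : StronglyScottOpen U)
    (hyU : y ∈ U) (hUx : U ⊆ Ici x) : SWayBelow x y := fun D hD a hDa => by
  obtain ⟨d, hd, hdU⟩ := hU.2 D hD a fun z hz =>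
    hU.1 (hDa ⟨hD.Ici_sSup_subset hz.1, hz.2⟩) hyU
  exact ⟨d, hd, hdU.trans hUx⟩

theorem sWayBelow_of_mem_strongScott_interior_Ici {x y : L}
    (hy : y ∈ @interior L (strongScott L) (Ici x)) : SWayBelow x y := by
  obtain ⟨U, hU, hyU, hUx⟩ := mem_strongScott_interior_iff.1 hy
  exact hU.sWayBelow hyU hUx

end CompletePartialOrder

section CSpace

variable [Preorder L] [t : TopologicalSpace L]

theorem IsCSpace.dirSet_interior_Ici (hC : IsCSpace t) (y : L) :
    DirSet {z | y ∈ interior (Ici z)} := by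
  refine ⟨?_, fun z₁ h₁ z₂ h₂ => ?_⟩
  · obtain ⟨z, -, hz, -⟩ := hC univ isOpen_univ y trivial
    exact ⟨z, hz⟩
  · obtain ⟨w, -, hyw, hw⟩ := hC _ (isOpen_interior.inter isOpen_interior) y ⟨h₁, h₂⟩
    have hw' := hw (le_refl w)
    exact ⟨w, hyw, interior_subset hw'.1, interior_subset hw'.2⟩

theorem IsCSpace.iInter_Ici_eq (hC : IsCSpace t) (hIic : ∀ z : L, IsOpen (Iic z)ᶜ) (y : L) :
    ⋂ d ∈ {z | y ∈ interior (Ici z)}, Ici d = Ici y := by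
  refine Subset.antisymm (fun z hz => ?_) fun z hyz =>
    mem_iInter₂.2 fun d hd => le_trans (interior_subset hd) hyz
  by_contra hyz
  obtain ⟨w, -, hyw, hw⟩ := hC _ (hIic z) y hyz
  exact hw (mem_iInter₂.1 hz w hyw) le_rfl

theorem IsCSpace.mem_interior_Ici_of_sWayBelow (hC : IsCSpace t)
    (hIic : ∀ z : L, IsOpen (Iic z)ᶜ) {x y : L} (h : SWayBelow x y) : y ∈ interior (Ici x) := by
  have hD := hC.dirSet_interior_Ici y
  obtain ⟨a, ha⟩ := hD.1
  obtain ⟨d, hd, hdx⟩ := h _ hD a (inter_subset_left.trans (hC.iInter_Ici_eq hIic y).subset)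
  have hdax : interior (Ici d) ∩ interior (Ici a) ⊆ interior (Ici x) := by
    rw [← interior_inter]
    exact interior_mono hdx
  exact hdax ⟨hd, ha⟩

end CSpace

theorem mem_strongScott_interior_Ici_iff [CompletePartialOrder L] :
    (∀ x y : L, y ∈ @interior L (strongScott L) (Ici x) → SWayBelow x y) ∧
    (StronglyContinuousDomain L →
      ∀ x : L, @interior L (strongScott L) (Ici x) = {y | SWayBelow x y}) := by
  have hIic (z : L) : IsOpen[strongScott L] (Iic z)ᶜ :=
    isOpen_generateFrom_of_mem (stronglyScottOpen_compl_Iic z)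
  refine ⟨fun _ _ => sWayBelow_of_mem_strongScott_interior_Ici, fun hC x => ?_⟩
  exact Subset.antisymm (fun _ => sWayBelow_of_mem_strongScott_interior_Ici)
    fun _ => IsCSpace.mem_interior_Ici_of_sWayBelow (t := strongScott L) hC hIic
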